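/- arXiv:2402.11778 — 2 statements merged into one kernel-verified Lean document; each statement's English description precedes it below -/
import Mathlib

section
/- Define f(λ, i) = ((1+λ)^{i+1} − λ^{i+1}) / (1+λ)^{i+1/4} for λ ≥ 0 and integer i ≥ 1. Then f(0, i) = 1 and there exists λ₀ > 0 such that f(λ₀, i) > 1; i.e., the function initially increases above its value at λ = 0. -/
/-- `f(λ, i) = ((1+λ)^{i+1} − λ^{i+1}) / (1+λ)^{i+1/4}` satisfies `f(0,i) = 1`
and there exists `λ₀ > 0` with `f(λ₀, i) > 1`. -/
theorem phase_transition_initial_increase (i : ℕ) (hi : 1 ≤ i) :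
    (((1 + (0:ℝ)) ^ (i + 1) - (0:ℝ) ^ (i + 1)) / (1 + (0:ℝ)) ^ ((i : ℝ) + 1 / 4) = 1) ∧
    ∃ l : ℝ, 0 < l ∧
      1 < ((1 + l) ^ (i + 1) - l ^ (i + 1)) / (1 + l) ^ ((i : ℝ) + 1 / 4) := by
  constructor
  · norm_num
  · refine ⟨1, one_pos, ?_⟩
    have h2 : (1:ℝ) + 1 = 2 := by norm_num
    rw [h2]
    have hD : (2:ℝ) ^ ((i : ℝ) + 1 / 4) = 2 ^ i * 2 ^ ((1:ℝ)/4) := by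
      rw [Real.rpow_add (by norm_num), Real.rpow_natCast]
    have h14 : (2:ℝ) ^ ((1:ℝ)/4) < 3 / 2 := by
      have h4 : ((2:ℝ) ^ ((1:ℝ)/4)) ^ (4:ℕ) < ((3:ℝ)/2) ^ (4:ℕ) := by
        rw [← Real.rpow_natCast ((2:ℝ) ^ ((1:ℝ)/4)) 4, ← Real.rpow_mul (by norm_num)]
        norm_num
      exact lt_of_pow_lt_pow_left₀ 4 (by norm_num) h4
    have hpi : (2:ℝ) ≤ 2 ^ i := by
      calc (2:ℝ) = 2 ^ 1 := by norm_num
        _ ≤ 2 ^ i := pow_le_pow_right₀ (by norm_num) hi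
    have hpos : (0:ℝ) < 2 ^ i * 2 ^ ((1:ℝ)/4) := by positivity
    rw [hD, one_pow, lt_div_iff₀ hpos]
    have hpow : (2:ℝ) ^ (i + 1) = 2 * 2 ^ i := by rw [pow_succ]; ring
    rw [one_mul, hpow]
    have hq : (0:ℝ) < 2 ^ ((1:ℝ)/4) := by positivity
    nlinarith [hpi, h14, hq]
end

section
/- (Carlson-type interpolation) For a measurable function g on ℝ^d and ε > 0, there is a constant C depending only on d and ε such that ∫√|g| ≤ C (∫|g|)^{ε/(2(ε+d))} · (∫ ‖x‖^{d+ε}|g(x)| dx)^{d/(2(ε+d))}, whenever both integrals on the right are finite. -/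
/-!
Write `|g| = w · (|g| / w)` with the weight `w x = (1 + (‖x‖ / R) ^ s)⁻¹`, `s = d + ε`, which is
integrable since `s > d`. Cauchy–Schwarz gives
`(∫ √|g|)² ≤ ∫ w · ∫ |g| / w = R ^ d W (∫ |g| + R ^ (-s) ∫ ‖x‖ ^ s |g|)`
with `W = ∫ (1 + ‖x‖ ^ s)⁻¹`, and `R ^ s = ∫ ‖x‖ ^ s |g| / ∫ |g|` balances the two terms.
When one of the two integrals vanishes, perturb both by `δ > 0` and let `δ → 0`.
-/

open MeasureTheory Module Filter Topology

theorem one_add_rpow_le_two_rpow_mul {a s : ℝ} (ha : 0 ≤ a) (hs : 0 ≤ s) :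
    (1 + a) ^ s ≤ 2 ^ s * (1 + a ^ s) := by
  rcases le_total a 1 with h | h
  · calc (1 + a) ^ s ≤ 2 ^ s := by gcongr; linarith
      _ ≤ 2 ^ s * (1 + a ^ s) :=
          le_mul_of_one_le_right (by positivity) (le_add_of_nonneg_right (by positivity))
  · calc (1 + a) ^ s ≤ (2 * a) ^ s := by gcongr; linarith
      _ = 2 ^ s * a ^ s := Real.mul_rpow zero_le_two ha
      _ ≤ 2 ^ s * (1 + a ^ s) := by gcongr; linarith

theorem sq_integral_sqrt_mul_le {α : Type*} [MeasurableSpace α] {μ : Measure α} {u v : α → ℝ}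
    (hu : Integrable u μ) (hv : Integrable v μ) (hu0 : 0 ≤ u) (hv0 : 0 ≤ v) :
    (∫ x, √(u x * v x) ∂μ) ^ 2 ≤ (∫ x, u x ∂μ) * ∫ x, v x ∂μ := by
  have memLp_sqrt : ∀ {f : α → ℝ}, Integrable f μ → 0 ≤ f →
      MemLp (fun x => √(f x)) (ENNReal.ofReal 2) μ := fun {f} hf hf0 => by
    rw [ENNReal.ofReal_ofNat,
      memLp_two_iff_integrable_sq (Real.continuous_sqrt.comp_aestronglyMeasurable hf.1)]
    simpa only [Real.sq_sqrt (hf0 _)] using hf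
  have holder := integral_mul_le_Lp_mul_Lq_of_nonneg Real.HolderConjugate.two_two
    (ae_of_all _ fun x => Real.sqrt_nonneg (u x)) (ae_of_all _ fun x => Real.sqrt_nonneg (v x))
    (memLp_sqrt hu hu0) (memLp_sqrt hv hv0)
  simp only [← Real.sqrt_mul (hu0 _), Real.rpow_two, Real.sq_sqrt (hu0 _), Real.sq_sqrt (hv0 _),
    ← Real.sqrt_eq_rpow] at holder
  calc (∫ x, √(u x * v x) ∂μ) ^ 2 ≤ (√(∫ x, u x ∂μ) * √(∫ x, v x ∂μ)) ^ 2 := by gcongr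
    _ = (∫ x, u x ∂μ) * ∫ x, v x ∂μ := by
        rw [mul_pow, Real.sq_sqrt (integral_nonneg hu0), Real.sq_sqrt (integral_nonneg hv0)]

theorem exists_rpow_mul_add_rpow_mul_eq {A B d ε : ℝ} (hA : 0 < A) (hB : 0 < B)
    (hεd : ε + d ≠ 0) :
    ∃ R > 0, R ^ d * (A + R ^ (-(d + ε)) * B) = 2 * A ^ (ε / (ε + d)) * B ^ (d / (ε + d)) := by
  have hBA : 0 ≤ B / A := by positivity
  refine ⟨(B / A) ^ (ε + d)⁻¹, by positivity, ?_⟩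
  have hRd : ((B / A) ^ (ε + d)⁻¹) ^ d = B ^ (d / (ε + d)) / A ^ (d / (ε + d)) := by
    rw [← Real.rpow_mul hBA, inv_mul_eq_div, Real.div_rpow hB.le hA.le]
  have hRs : ((B / A) ^ (ε + d)⁻¹) ^ (-(d + ε)) = A / B := by
    rw [← Real.rpow_mul hBA, add_comm d ε, inv_mul_eq_div, neg_div, div_self hεd,
      Real.rpow_neg_one, inv_div]
  have hA_pow : A ^ (ε / (ε + d)) = A / A ^ (d / (ε + d)) := by
    rw [eq_div_iff (by positivity), ← Real.rpow_add hA, ← add_div, div_self hεd, Real.rpow_one]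
  rw [hRd, hRs, div_mul_cancel₀ _ hB.ne', hA_pow]
  ring

theorem le_two_mul_rpow_mul_rpow_of_forall_le {X A B d ε : ℝ} (hA : 0 ≤ A) (hB : 0 ≤ B)
    (hd : 0 ≤ d) (hε : 0 < ε) (h : ∀ R > 0, X ≤ R ^ d * (A + R ^ (-(d + ε)) * B)) :
    X ≤ 2 * A ^ (ε / (ε + d)) * B ^ (d / (ε + d)) := by
  set F : ℝ → ℝ := fun δ => 2 * (A + δ) ^ (ε / (ε + d)) * (B + δ) ^ (d / (ε + d))
  have hF : Continuous F := by
    have hA_pow := (continuous_const_add A).rpow_const fun _ =>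
      Or.inr (by positivity : 0 ≤ ε / (ε + d))
    have hB_pow := (continuous_const_add B).rpow_const fun _ =>
      Or.inr (by positivity : 0 ≤ d / (ε + d))
    fun_prop
  have le_F : ∀ δ > 0, X ≤ F δ := fun δ hδ => by
    obtain ⟨R, hR, hR_eq⟩ := exists_rpow_mul_add_rpow_mul_eq (A := A + δ) (B := B + δ)
      (d := d) (ε := ε) (by positivity) (by positivity) (by positivity)
    calc X ≤ R ^ d * (A + R ^ (-(d + ε)) * B) := h R hR
      _ ≤ R ^ d * ((A + δ) + R ^ (-(d + ε)) * (B + δ)) := by gcongr <;> linarith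
      _ = F δ := hR_eq
  refine (ge_of_tendsto (hF.continuousWithinAt (s := Set.Ioi 0) (x := 0)) ?_).trans_eq (by simp [F])
  exact eventually_nhdsWithin_of_forall le_F

section AddHaar

variable {E : Type*} [NormedAddCommGroup E] [NormedSpace ℝ E] [FiniteDimensional ℝ E]
  [MeasurableSpace E] [BorelSpace E] (μ : Measure E) [μ.IsAddHaarMeasure]

theorem integrable_inv_one_add_norm_rpow {s : ℝ} (hs : (finrank ℝ E : ℝ) < s) :
    Integrable (fun x : E => (1 + ‖x‖ ^ s)⁻¹) μ := by
  have hs0 : 0 ≤ s := (Nat.cast_nonneg _).trans hs.le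
  refine ((integrable_one_add_norm hs).const_mul (2 ^ s)).mono' (by fun_prop)
    (ae_of_all _ fun x => ?_)
  rw [Real.norm_of_nonneg (by positivity), Real.rpow_neg (by positivity), ← div_eq_mul_inv,
    le_div_iff₀ (by positivity), ← div_eq_inv_mul, div_le_iff₀ (by positivity)]
  exact one_add_rpow_le_two_rpow_mul (norm_nonneg x) hs0

theorem integral_inv_one_add_norm_rpow_pos {s : ℝ} (hs : (finrank ℝ E : ℝ) < s) :
    0 < ∫ x : E, (1 + ‖x‖ ^ s)⁻¹ ∂μ := by
  rw [integral_pos_iff_support_of_nonneg (fun x => by positivity)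
    (integrable_inv_one_add_norm_rpow μ hs), Function.support_eq_univ fun x => by positivity]
  exact NeZero.pos (μ Set.univ)

theorem sq_integral_sqrt_abs_le {g : E → ℝ} {s R : ℝ} (hs : (finrank ℝ E : ℝ) < s) (hR : 0 < R)
    (hg : Integrable g μ) (hgs : Integrable (fun x => ‖x‖ ^ s * |g x|) μ) :
    (∫ x, √|g x| ∂μ) ^ 2 ≤ (∫ x, (1 + ‖x‖ ^ s)⁻¹ ∂μ) *
      (R ^ finrank ℝ E * ((∫ x, |g x| ∂μ) + R ^ (-s) * ∫ x, ‖x‖ ^ s * |g x| ∂μ)) := by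
  have norm_smul_rpow : ∀ x : E, ‖R⁻¹ • x‖ ^ s = R ^ (-s) * ‖x‖ ^ s := fun x => by
    rw [norm_smul, Real.norm_of_nonneg (inv_nonneg.2 hR.le), Real.mul_rpow (inv_nonneg.2 hR.le)
      (norm_nonneg x), Real.inv_rpow hR.le, Real.rpow_neg hR.le]
  set u : E → ℝ := fun x => (1 + R ^ (-s) * ‖x‖ ^ s)⁻¹
  set v : E → ℝ := fun x => |g x| + R ^ (-s) * (‖x‖ ^ s * |g x|)
  have huv : ∀ x, |g x| = u x * v x := fun x => by
    have : 0 < 1 + R ^ (-s) * ‖x‖ ^ s := by positivity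
    simp only [u, v]
    field_simp
  have hu : Integrable u μ := by
    simpa only [norm_smul_rpow] using
      (integrable_inv_one_add_norm_rpow μ hs).comp_smul (inv_ne_zero hR.ne')
  have hv : Integrable v μ := hg.abs.add (hgs.const_mul _)
  have integral_u : ∫ x, u x ∂μ = R ^ finrank ℝ E * ∫ x, (1 + ‖x‖ ^ s)⁻¹ ∂μ := by
    simp only [u]
    simpa only [norm_smul_rpow, smul_eq_mul] using
      μ.integral_comp_inv_smul_of_nonneg (fun x => (1 + ‖x‖ ^ s)⁻¹) hR.le
  have integral_v : ∫ x, v x ∂μ = (∫ x, |g x| ∂μ) + R ^ (-s) * ∫ x, ‖x‖ ^ s * |g x| ∂μ := by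
    rw [integral_add hg.abs (hgs.const_mul _), integral_const_mul]
  calc (∫ x, √|g x| ∂μ) ^ 2 = (∫ x, √(u x * v x) ∂μ) ^ 2 := by simp only [← huv]
    _ ≤ (∫ x, u x ∂μ) * ∫ x, v x ∂μ :=
        sq_integral_sqrt_mul_le hu hv (fun x => by positivity) (fun x => by positivity)
    _ = _ := by rw [integral_u, integral_v]; ring

end AddHaar

/-- Carlson-type interpolation inequality: there is a constant `C = C(d, ε)`
such that `∫√|g| ≤ C (∫|g|)^{ε/(2(ε+d))} (∫‖x‖^{d+ε}|g(x)|dx)^{d/(2(ε+d))}`. -/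
theorem carlson_interpolation (d : ℕ) (ε : ℝ) (hε : 0 < ε) :
    ∃ C : ℝ, 0 < C ∧ ∀ g : (Fin d → ℝ) → ℝ,
      Integrable g →
      Integrable (fun x => ‖x‖ ^ ((d : ℝ) + ε) * |g x|) →
      (∫ x, Real.sqrt |g x|) ≤
        C * (∫ x, |g x|) ^ (ε / (2 * (ε + d))) *
          (∫ x, ‖x‖ ^ ((d : ℝ) + ε) * |g x|) ^ ((d : ℝ) / (2 * (ε + d))) := by
  have hdim : (finrank ℝ (Fin d → ℝ) : ℝ) < d + ε := by simpa using hε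
  set W := ∫ x : Fin d → ℝ, (1 + ‖x‖ ^ ((d : ℝ) + ε))⁻¹
  have hW : 0 < W := integral_inv_one_add_norm_rpow_pos volume hdim
  refine ⟨√(2 * W), by positivity, fun g hg hgs => ?_⟩
  set A := ∫ x, |g x|
  set B := ∫ x, ‖x‖ ^ ((d : ℝ) + ε) * |g x|
  have hA : 0 ≤ A := integral_nonneg fun x => abs_nonneg _
  have hB : 0 ≤ B := integral_nonneg fun x => by positivity
  have hsq : (∫ x, √|g x|) ^ 2 / W ≤ 2 * A ^ (ε / (ε + d)) * B ^ (d / (ε + d)) := by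
    refine le_two_mul_rpow_mul_rpow_of_forall_le hA hB d.cast_nonneg hε fun R hR => ?_
    rw [div_le_iff₀' hW, Real.rpow_natCast]
    simpa only [finrank_fin_fun] using sq_integral_sqrt_abs_le volume hdim hR hg hgs
  rw [div_le_iff₀' hW] at hsq
  have half_exp : ∀ t : ℝ, t / (ε + d) * (1 / 2) = t / (2 * (ε + d)) := fun t => by
    rw [div_mul_div_comm, mul_one, mul_comm]
  calc ∫ x, √|g x| = √((∫ x, √|g x|) ^ 2) :=
        (Real.sqrt_sq (integral_nonneg fun x => Real.sqrt_nonneg _)).symm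
    _ ≤ √(2 * W * A ^ (ε / (ε + d)) * B ^ (d / (ε + d))) :=
        Real.sqrt_le_sqrt (hsq.trans_eq (by ring))
    _ = √(2 * W) * A ^ (ε / (2 * (ε + d))) * B ^ ((d : ℝ) / (2 * (ε + d))) := by
        rw [Real.sqrt_mul (by positivity), Real.sqrt_mul (by positivity), Real.sqrt_eq_rpow (A ^ _),
          Real.sqrt_eq_rpow (B ^ _), ← Real.rpow_mul hA, ← Real.rpow_mul hB, half_exp, half_exp]
end
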